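/- arXiv:2512.03604 — 5 statements merged into one kernel-verified Lean document; each statement's English description precedes it below -/
import Mathlib

section
/- Let P and Q be symmetric positive definite n×n real matrices, with smallest eigenvalue λ_min(Q) of Q and largest eigenvalue λ_max(P) of P. If x, e ∈ ℝⁿ satisfy the directional triggering condition 2 xᵀ P B K e ≤ σ xᵀ P x, then -xᵀ Q x + 2 xᵀ P B K e ≤ -(λ_min(Q) - σ λ_max(P)) ‖x‖². Consequently, if σ < λ_min(Q)/λ_max(P), then -xᵀ Q x + 2 xᵀ P B K e < 0 for every x ≠ 0. -/
/-!
Expanding `x` in an orthonormal eigenbasis of a symmetric matrix `A` writes `xᵀ A x` as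
`∑ λᵢ ⟪vᵢ, x⟫²`, with `∑ ⟪vᵢ, x⟫² = ‖x‖²`; hence `λ_min(A) ‖x‖² ≤ xᵀ A x ≤ λ_max(A) ‖x‖²`.
The triggering condition bounds the cross term by `σ xᵀ P x ≤ σ λ_max(P) ‖x‖²`, and
`xᵀ Q x ≥ λ_min(Q) ‖x‖²` gives the decay bound, whose right side is negative for `x ≠ 0`
once `σ λ_max(P) < λ_min(Q)`.
-/

open Matrix
open scoped RealInnerProductSpace

namespace Matrix.IsHermitian

variable {ι : Type*} [Fintype ι] [DecidableEq ι] {A : Matrix ι ι ℝ}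

lemma inner_eigenvectorBasis_mulVec (hA : A.IsHermitian) (x : EuclideanSpace ℝ ι) (i : ι) :
    ⟪hA.eigenvectorBasis i, WithLp.toLp 2 (A *ᵥ x)⟫ =
      hA.eigenvalues i * ⟪hA.eigenvectorBasis i, x⟫ := by
  have hAt : Aᵀ = A := by rw [← conjTranspose_eq_transpose_of_trivial]; exact hA
  simp only [EuclideanSpace.inner_eq_star_dotProduct, star_trivial]
  rw [dotProduct_comm, dotProduct_mulVec, ← mulVec_transpose, hAt, hA.mulVec_eigenvectorBasis,
    smul_dotProduct, smul_eq_mul, dotProduct_comm]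

lemma dotProduct_mulVec_eq_sum (hA : A.IsHermitian) (x : EuclideanSpace ℝ ι) :
    x ⬝ᵥ (A *ᵥ x) = ∑ i, hA.eigenvalues i * ⟪hA.eigenvectorBasis i, x⟫ ^ 2 := by
  have hx : x ⬝ᵥ (A *ᵥ x) = ⟪x, WithLp.toLp 2 (A *ᵥ x)⟫ := by
    rw [EuclideanSpace.inner_eq_star_dotProduct, star_trivial, dotProduct_comm]
  rw [hx, ← hA.eigenvectorBasis.sum_inner_mul_inner x]
  refine Finset.sum_congr rfl fun i _ => ?_
  rw [inner_eigenvectorBasis_mulVec, real_inner_comm]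
  ring

lemma iInf_eigenvalues_mul_norm_sq_le (hA : A.IsHermitian) (x : EuclideanSpace ℝ ι) :
    (⨅ i, hA.eigenvalues i) * ‖x‖ ^ 2 ≤ x ⬝ᵥ (A *ᵥ x) := by
  rw [hA.dotProduct_mulVec_eq_sum, ← hA.eigenvectorBasis.sum_sq_inner_right x, Finset.mul_sum]
  exact Finset.sum_le_sum fun i _ =>
    mul_le_mul_of_nonneg_right (ciInf_le (Finite.bddBelow_range _) i) (sq_nonneg _)

lemma dotProduct_mulVec_le_iSup_eigenvalues_mul_norm_sq (hA : A.IsHermitian)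
    (x : EuclideanSpace ℝ ι) :
    x ⬝ᵥ (A *ᵥ x) ≤ (⨆ i, hA.eigenvalues i) * ‖x‖ ^ 2 := by
  rw [hA.dotProduct_mulVec_eq_sum, ← hA.eigenvectorBasis.sum_sq_inner_right x, Finset.mul_sum]
  exact Finset.sum_le_sum fun i _ =>
    mul_le_mul_of_nonneg_right (le_ciSup (Finite.bddAbove_range _) i) (sq_nonneg _)

end Matrix.IsHermitian

lemma Matrix.PosDef.iSup_eigenvalues_pos {ι : Type*} [Fintype ι] [DecidableEq ι] [Nonempty ι]
    {A : Matrix ι ι ℝ} (hA : A.PosDef) : 0 < ⨆ i, hA.isHermitian.eigenvalues i :=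
  (hA.eigenvalues_pos (Classical.arbitrary ι)).trans_le (le_ciSup (Finite.bddAbove_range _) _)

theorem directional_trigger_decay_bound_general {n m : ℕ}
    (B : Matrix (Fin n) (Fin m) ℝ)
    (K : Matrix (Fin m) (Fin n) ℝ) (P Q : Matrix (Fin n) (Fin n) ℝ)
    (hP : P.PosDef) (hQ : Q.PosDef) (σ : ℝ) (hσ : σ ∈ Set.Ioo (0 : ℝ) 1)
    (x e : EuclideanSpace ℝ (Fin n))
    (htrig : 2 * (x ⬝ᵥ ((P * B * K) *ᵥ e)) ≤ σ * (x ⬝ᵥ (P *ᵥ x))) :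
    (-(x ⬝ᵥ (Q *ᵥ x)) + 2 * (x ⬝ᵥ ((P * B * K) *ᵥ e))
        ≤ -((⨅ i, hQ.isHermitian.eigenvalues i) - σ * ⨆ i, hP.isHermitian.eigenvalues i)
            * ‖x‖ ^ 2) ∧
    (σ < (⨅ i, hQ.isHermitian.eigenvalues i) / (⨆ i, hP.isHermitian.eigenvalues i) →
      x ≠ 0 → -(x ⬝ᵥ (Q *ᵥ x)) + 2 * (x ⬝ᵥ ((P * B * K) *ᵥ e)) < 0) := by
  set lQ := ⨅ i, hQ.isHermitian.eigenvalues i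
  set lP := ⨆ i, hP.isHermitian.eigenvalues i
  have hdecay : -(x ⬝ᵥ (Q *ᵥ x)) + 2 * (x ⬝ᵥ ((P * B * K) *ᵥ e)) ≤ -(lQ - σ * lP) * ‖x‖ ^ 2 :=
    calc -(x ⬝ᵥ (Q *ᵥ x)) + 2 * (x ⬝ᵥ ((P * B * K) *ᵥ e))
        ≤ -(lQ * ‖x‖ ^ 2) + σ * (lP * ‖x‖ ^ 2) := by
          gcongr ?_ + ?_
          · exact neg_le_neg (hQ.isHermitian.iInf_eigenvalues_mul_norm_sq_le x)
          · exact htrig.trans <| mul_le_mul_of_nonneg_left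
              (hP.isHermitian.dotProduct_mulVec_le_iSup_eigenvalues_mul_norm_sq x) hσ.1.le
      _ = -(lQ - σ * lP) * ‖x‖ ^ 2 := by ring
  refine ⟨hdecay, fun hσlt hx => hdecay.trans_lt ?_⟩
  obtain ⟨i, -⟩ := Function.ne_iff.mp ((WithLp.ofLp_eq_zero 2).ne.mpr hx)
  have : Nonempty (Fin n) := ⟨i⟩
  have hgap : σ * lP < lQ := (lt_div_iff₀ hP.iSup_eigenvalues_pos).mp hσlt
  exact mul_neg_of_neg_of_pos (by linarith) (by positivity)

/-- **Decay bound under the directional triggering condition.**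
If the directional triggering condition `2 xᵀ P B K e ≤ σ xᵀ P x` holds, then
`-xᵀ Q x + 2 xᵀ P B K e ≤ -(λ_min(Q) - σ λ_max(P)) ‖x‖²`; consequently, if
`σ < λ_min(Q)/λ_max(P)` then this quantity is strictly negative for every `x ≠ 0`. -/
theorem directional_trigger_decay_bound {n m : ℕ}
    (A : Matrix (Fin n) (Fin n) ℝ) (B : Matrix (Fin n) (Fin m) ℝ)
    (K : Matrix (Fin m) (Fin n) ℝ) (P Q : Matrix (Fin n) (Fin n) ℝ)
    (hP : P.PosDef) (hQ : Q.PosDef) (σ : ℝ) (hσ : σ ∈ Set.Ioo (0 : ℝ) 1)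
    (x e : EuclideanSpace ℝ (Fin n))
    (htrig : 2 * (x ⬝ᵥ ((P * B * K) *ᵥ e)) ≤ σ * (x ⬝ᵥ (P *ᵥ x))) :
    (-(x ⬝ᵥ (Q *ᵥ x)) + 2 * (x ⬝ᵥ ((P * B * K) *ᵥ e))
        ≤ -((⨅ i, hQ.isHermitian.eigenvalues i) - σ * ⨆ i, hP.isHermitian.eigenvalues i)
            * ‖x‖ ^ 2) ∧
    (σ < (⨅ i, hQ.isHermitian.eigenvalues i) / (⨆ i, hP.isHermitian.eigenvalues i) →
      x ≠ 0 → -(x ⬝ᵥ (Q *ᵥ x)) + 2 * (x ⬝ᵥ ((P * B * K) *ᵥ e)) < 0) :=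
  directional_trigger_decay_bound_general B K P Q hP hQ σ hσ x e htrig
end

section
/- Let α := λ_min(Q) - σ λ_max(P) > 0. Suppose x : [0,∞) → ℝⁿ is differentiable and there exists e : [0,∞) → ℝⁿ such that for all t ≥ 0: x'(t) = A_cl x(t) + B K e(t) and 2 x(t)ᵀ P B K e(t) ≤ σ x(t)ᵀ P x(t). Then V(t) = x(t)ᵀ P x(t) satisfies V(t) ≤ V(0)·exp(-(α/λ_max(P)) t) for all t ≥ 0; consequently ‖x(t)‖² ≤ (λ_max(P)/λ_min(P))·exp(-(α/λ_max(P)) t)·‖x(0)‖², and x(t) → 0 as t → ∞. -/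
/-! Along the closed loop the Lyapunov equation gives `dV/dt = -xᵀ Q x + 2 xᵀ P B K e`, and the
triggering rule bounds the second term by `σ V`. With the Rayleigh bounds
`λ_min(Q) ‖x‖² ≤ xᵀ Q x` and `V ≤ λ_max(P) ‖x‖²` this becomes `dV/dt ≤ -(α / λ_max(P)) V`, so
Grönwall's inequality makes `V` decay exponentially; comparing `V` with `‖x‖²` through the
extremal eigenvalues of `P` transfers the decay to the state. -/

open Matrix

namespace Matrix.IsHermitian

variable {ι : Type*} [Fintype ι] [DecidableEq ι] {A : Matrix ι ι ℝ}

lemma dotProduct_mulVec_eq_sum_eigenvalues (hA : A.IsHermitian) (x : ι → ℝ) :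
    x ⬝ᵥ (A *ᵥ x) =
      ∑ i, hA.eigenvalues i * ((star (hA.eigenvectorUnitary : Matrix ι ι ℝ) *ᵥ x) i) ^ 2 := by
  conv_lhs => rw [hA.spectral_theorem, Unitary.conjStarAlgAut_apply]
  rw [← mulVec_mulVec, ← mulVec_mulVec, dotProduct_mulVec, ← mulVec_transpose,
    star_eq_conjTranspose, conjTranspose_eq_transpose_of_trivial]
  simp [dotProduct, mulVec_diagonal, sq, mul_left_comm]

lemma dotProduct_self_star_eigenvectorUnitary_mulVec (hA : A.IsHermitian) (x : ι → ℝ) :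
    (star (hA.eigenvectorUnitary : Matrix ι ι ℝ) *ᵥ x) ⬝ᵥ
      (star (hA.eigenvectorUnitary : Matrix ι ι ℝ) *ᵥ x) = x ⬝ᵥ x := by
  rw [dotProduct_mulVec, ← mulVec_transpose, mulVec_mulVec, star_eq_conjTranspose,
    conjTranspose_eq_transpose_of_trivial, transpose_transpose,
    ← conjTranspose_eq_transpose_of_trivial, ← star_eq_conjTranspose,
    Unitary.mul_star_self_of_mem (SetLike.coe_mem _), one_mulVec]

lemma iInf_eigenvalues_mul_dotProduct_le (hA : A.IsHermitian) (x : ι → ℝ) :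
    (⨅ i, hA.eigenvalues i) * (x ⬝ᵥ x) ≤ x ⬝ᵥ (A *ᵥ x) := by
  rw [hA.dotProduct_mulVec_eq_sum_eigenvalues,
    ← hA.dotProduct_self_star_eigenvectorUnitary_mulVec x]
  simp only [dotProduct, ← sq, Finset.mul_sum]
  gcongr with i
  exact ciInf_le (Set.finite_range hA.eigenvalues).bddBelow i

lemma dotProduct_mulVec_le_iSup_eigenvalues_mul (hA : A.IsHermitian) (x : ι → ℝ) :
    x ⬝ᵥ (A *ᵥ x) ≤ (⨆ i, hA.eigenvalues i) * (x ⬝ᵥ x) := by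
  rw [hA.dotProduct_mulVec_eq_sum_eigenvalues,
    ← hA.dotProduct_self_star_eigenvectorUnitary_mulVec x]
  simp only [dotProduct, ← sq, Finset.mul_sum]
  gcongr with i
  exact le_ciSup (Set.finite_range hA.eigenvalues).bddAbove i

end Matrix.IsHermitian

lemma EuclideanSpace.real_norm_sq_eq_dotProduct {ι : Type*} [Fintype ι] (v : EuclideanSpace ℝ ι) :
    ‖v‖ ^ 2 = v ⬝ᵥ v := by
  rw [EuclideanSpace.real_norm_sq_eq]
  simp [dotProduct, sq]

namespace Matrix.PosDef

variable {ι : Type*} [Fintype ι] [DecidableEq ι] [Nonempty ι] {A : Matrix ι ι ℝ}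

lemma iInf_eigenvalues_pos (hA : A.PosDef) : 0 < ⨅ i, hA.isHermitian.eigenvalues i := by
  obtain ⟨i, hi⟩ := exists_eq_ciInf_of_finite (f := hA.isHermitian.eigenvalues)
  exact hi ▸ hA.eigenvalues_pos i

lemma iSup_eigenvalues_pos_s4 (hA : A.PosDef) : 0 < ⨆ i, hA.isHermitian.eigenvalues i :=
  hA.iInf_eigenvalues_pos.trans_le <| ciInf_le_ciSup
    (Set.finite_range hA.isHermitian.eigenvalues).bddBelow
    (Set.finite_range hA.isHermitian.eigenvalues).bddAbove

lemma norm_sq_le_of_dotProduct_mulVec_le (hA : A.PosDef) {v w : EuclideanSpace ℝ ι} {c : ℝ}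
    (hc : 0 ≤ c) (h : v ⬝ᵥ (A *ᵥ v) ≤ (w ⬝ᵥ (A *ᵥ w)) * c) :
    ‖v‖ ^ 2 ≤ ((⨆ i, hA.isHermitian.eigenvalues i) / ⨅ i, hA.isHermitian.eigenvalues i) * c *
      ‖w‖ ^ 2 := by
  rw [div_mul_eq_mul_div, div_mul_eq_mul_div, le_div_iff₀ hA.iInf_eigenvalues_pos, mul_comm,
    EuclideanSpace.real_norm_sq_eq_dotProduct, EuclideanSpace.real_norm_sq_eq_dotProduct]
  calc (⨅ i, hA.isHermitian.eigenvalues i) * (v ⬝ᵥ v) ≤ v ⬝ᵥ (A *ᵥ v) :=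
        hA.isHermitian.iInf_eigenvalues_mul_dotProduct_le v
    _ ≤ (w ⬝ᵥ (A *ᵥ w)) * c := h
    _ ≤ (⨆ i, hA.isHermitian.eigenvalues i) * (w ⬝ᵥ w) * c := by
        gcongr; exact hA.isHermitian.dotProduct_mulVec_le_iSup_eigenvalues_mul w
    _ = _ := by ring

end Matrix.PosDef

lemma two_mul_dotProduct_mulVec_mulVec {ι : Type*} [Fintype ι] {P : Matrix ι ι ℝ} (hP : Pᵀ = P)
    (M : Matrix ι ι ℝ) (v : ι → ℝ) :
    2 * (v ⬝ᵥ (P *ᵥ (M *ᵥ v))) = v ⬝ᵥ ((Mᵀ * P + P * M) *ᵥ v) := by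
  rw [add_mulVec, dotProduct_add, ← mulVec_mulVec, ← mulVec_mulVec,
    Matrix.dotProduct_transpose_mulVec M v, dotProduct_comm (P *ᵥ v),
    ← Matrix.dotProduct_transpose_mulVec P v, hP]
  ring

section Derivatives

variable {ι : Type*} [Fintype ι] {f g : ℝ → ι → ℝ} {f' g' : ι → ℝ} {t : ℝ}

lemma HasDerivAt.dotProduct (hf : HasDerivAt f f' t) (hg : HasDerivAt g g' t) :
    HasDerivAt (fun s => f s ⬝ᵥ g s) (f' ⬝ᵥ g t + f t ⬝ᵥ g') t := by
  simp only [_root_.dotProduct, ← Finset.sum_add_distrib]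
  exact HasDerivAt.fun_sum fun i _ => (hasDerivAt_pi.1 hf i).mul (hasDerivAt_pi.1 hg i)

lemma HasDerivAt.mulVec (M : Matrix ι ι ℝ) (hf : HasDerivAt f f' t) :
    HasDerivAt (fun s => M *ᵥ f s) (M *ᵥ f') t :=
  (Matrix.mulVecLin M).toContinuousLinearMap.hasFDerivAt.comp_hasDerivAt t hf

lemma HasDerivAt.dotProduct_mulVec_self {P : Matrix ι ι ℝ} (hP : Pᵀ = P)
    (hf : HasDerivAt f f' t) :
    HasDerivAt (fun s => f s ⬝ᵥ (P *ᵥ f s)) (2 * (f t ⬝ᵥ (P *ᵥ f'))) t := by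
  convert hf.dotProduct (hf.mulVec P) using 1
  rw [dotProduct_comm, dotProduct_mulVec, ← mulVec_transpose, hP]
  ring

end Derivatives

lemma le_mul_exp_of_hasDerivAt_le_mul {f f' : ℝ → ℝ} {K : ℝ}
    (hf : ∀ t ≥ 0, HasDerivAt f (f' t) t) (bound : ∀ t ≥ 0, f' t ≤ K * f t) {t : ℝ}
    (ht : 0 ≤ t) : f t ≤ f 0 * Real.exp (K * t) := by
  have := le_gronwallBound_of_liminf_deriv_right_le (f' := f') (δ := f 0) (ε := 0) (b := t)
    (fun s hs => (hf s hs.1).continuousAt.continuousWithinAt)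
    (fun s hs _ hr => (hf s hs.1).hasDerivWithinAt.liminf_right_slope_le hr) le_rfl
    (fun s hs => by simpa using bound s hs.1) t ⟨ht, le_rfl⟩
  simpa [gronwallBound_ε0] using this

lemma tendsto_nhds_zero_of_norm_sq_le_mul_exp {E : Type*} [NormedAddCommGroup E] {f : ℝ → E}
    {C c : ℝ} (hc : 0 < c) (h : ∀ t ≥ 0, ‖f t‖ ^ 2 ≤ C * Real.exp (-c * t)) :
    Filter.Tendsto f Filter.atTop (nhds 0) := by
  have hexp : Filter.Tendsto (fun t => C * Real.exp (-c * t)) Filter.atTop (nhds 0) := by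
    simpa using (Real.tendsto_exp_atBot.comp
      (Filter.tendsto_id.const_mul_atTop_of_neg (neg_lt_zero.2 hc))).const_mul C
  have hsq : Filter.Tendsto (fun t => ‖f t‖ ^ 2) Filter.atTop (nhds 0) :=
    squeeze_zero' (.of_forall fun _ => by positivity) ((Filter.eventually_ge_atTop 0).mono h) hexp
  rw [tendsto_zero_iff_norm_tendsto_zero]
  simpa [Real.sqrt_sq (norm_nonneg _)] using hsq.sqrt

theorem dotProduct_mulVec_le_mul_exp_of_directional_trigger {ι κ : Type*} [Fintype ι]
    [DecidableEq ι] [Fintype κ] {A : Matrix ι ι ℝ} {B : Matrix ι κ ℝ} {K : Matrix κ ι ℝ}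
    {P Q : Matrix ι ι ℝ} (hP : P.IsHermitian) (hQ : Q.IsHermitian)
    (hQmin : 0 ≤ ⨅ i, hQ.eigenvalues i) (hPmax : 0 < ⨆ i, hP.eigenvalues i)
    (hLyap : (A - B * K)ᵀ * P + P * (A - B * K) = -Q) {σ : ℝ} {y e : ℝ → ι → ℝ}
    (hy : ∀ t ≥ 0, HasDerivAt y ((A - B * K) *ᵥ y t + (B * K) *ᵥ e t) t)
    (htrig : ∀ t ≥ 0, 2 * (y t ⬝ᵥ ((P * B * K) *ᵥ e t)) ≤ σ * (y t ⬝ᵥ (P *ᵥ y t)))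
    {t : ℝ} (ht : 0 ≤ t) :
    y t ⬝ᵥ (P *ᵥ y t) ≤ (y 0 ⬝ᵥ (P *ᵥ y 0)) * Real.exp
      (-(((⨅ i, hQ.eigenvalues i) - σ * ⨆ i, hP.eigenvalues i) / ⨆ i, hP.eigenvalues i) * t) := by
  set qmin := ⨅ i, hQ.eigenvalues i
  set pmax := ⨆ i, hP.eigenvalues i
  have hPt : Pᵀ = P := by rw [← conjTranspose_eq_transpose_of_trivial, hP.eq]
  refine le_mul_exp_of_hasDerivAt_le_mul (f := fun s => y s ⬝ᵥ (P *ᵥ y s))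
    (f' := fun s => -(y s ⬝ᵥ (Q *ᵥ y s)) + 2 * (y s ⬝ᵥ ((P * B * K) *ᵥ e s)))
    (fun s hs => ?_) (fun s hs => ?_) ht
  · convert (hy s hs).dotProduct_mulVec_self hPt using 1
    rw [mulVec_add, dotProduct_add, mul_add, two_mul_dotProduct_mulVec_mulVec hPt, hLyap,
      neg_mulVec, dotProduct_neg, mulVec_mulVec, Matrix.mul_assoc P B K]
  · have hQs := hQ.iInf_eigenvalues_mul_dotProduct_le (y s)
    have hPs := hP.dotProduct_mulVec_le_iSup_eigenvalues_mul (y s)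
    have hscaled : qmin / pmax * (y s ⬝ᵥ (P *ᵥ y s)) ≤ qmin * (y s ⬝ᵥ y s) := by
      rw [div_mul_eq_mul_div, div_le_iff₀ hPmax, mul_assoc, mul_comm _ pmax]
      exact mul_le_mul_of_nonneg_left hPs hQmin
    calc -(y s ⬝ᵥ (Q *ᵥ y s)) + 2 * (y s ⬝ᵥ ((P * B * K) *ᵥ e s))
        ≤ -(qmin / pmax * (y s ⬝ᵥ (P *ᵥ y s))) + σ * (y s ⬝ᵥ (P *ᵥ y s)) := by
          linarith [htrig s hs]
      _ = -((qmin - σ * pmax) / pmax) * (y s ⬝ᵥ (P *ᵥ y s)) := by field_simp; ring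

theorem directional_trigger_asymptotic_stability_general {n m : ℕ}
    (A : Matrix (Fin n) (Fin n) ℝ) (B : Matrix (Fin n) (Fin m) ℝ)
    (K : Matrix (Fin m) (Fin n) ℝ) (P Q : Matrix (Fin n) (Fin n) ℝ)
    (hP : P.PosDef) (hQ : Q.PosDef)
    (hLyap : (A - B * K)ᵀ * P + P * (A - B * K) = -Q)
    (σ : ℝ)
    (hα : 0 < (⨅ i, hQ.isHermitian.eigenvalues i)
            - σ * ⨆ i, hP.isHermitian.eigenvalues i)
    (x e : ℝ → EuclideanSpace ℝ (Fin n))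
    (hx : ∀ t ≥ (0 : ℝ), HasDerivAt x
      ((WithLp.toLp 2 ((A - B * K) *ᵥ x t + (B * K) *ᵥ e t) : EuclideanSpace ℝ (Fin n))) t)
    (htrig : ∀ t ≥ (0 : ℝ),
      2 * (x t ⬝ᵥ ((P * B * K) *ᵥ e t)) ≤ σ * (x t ⬝ᵥ (P *ᵥ x t))) :
    let lmaxP : ℝ := ⨆ i, hP.isHermitian.eigenvalues i
    let lminP : ℝ := ⨅ i, hP.isHermitian.eigenvalues i
    let α : ℝ := (⨅ i, hQ.isHermitian.eigenvalues i) - σ * lmaxP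
    (∀ t ≥ (0 : ℝ),
        x t ⬝ᵥ (P *ᵥ x t) ≤ (x 0 ⬝ᵥ (P *ᵥ x 0)) * Real.exp (-(α / lmaxP) * t)) ∧
    (∀ t ≥ (0 : ℝ),
        ‖x t‖ ^ 2 ≤ (lmaxP / lminP) * Real.exp (-(α / lmaxP) * t) * ‖x 0‖ ^ 2) ∧
    Filter.Tendsto x Filter.atTop (nhds 0) := by
  intro lmaxP lminP α
  -- for `n = 0` both extremal eigenvalues are the junk value `0`, contradicting `hα`
  have : Nonempty (Fin n) := by
    by_contra hempty
    rw [not_nonempty_iff] at hempty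
    simp at hα
  have hdecay (t : ℝ) (ht : 0 ≤ t) :=
    dotProduct_mulVec_le_mul_exp_of_directional_trigger hP.isHermitian hQ.isHermitian
      hQ.iInf_eigenvalues_pos.le hP.iSup_eigenvalues_pos_s4 hLyap (y := fun s => (x s).ofLp)
      (fun s hs => (EuclideanSpace.equiv (Fin n) ℝ).hasFDerivAt.comp_hasDerivAt s (hx s hs))
      htrig ht
  have hnorm (t : ℝ) (ht : 0 ≤ t) :=
    hP.norm_sq_le_of_dotProduct_mulVec_le (Real.exp_pos _).le (hdecay t ht)
  refine ⟨hdecay, hnorm, tendsto_nhds_zero_of_norm_sq_le_mul_exp (C := lmaxP / lminP * ‖x 0‖ ^ 2)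
    (div_pos hα hP.iSup_eigenvalues_pos_s4) fun t ht => (hnorm t ht).trans_eq (by ring)⟩

/-- **Exponential decay and asymptotic stability under directional triggering.**
With `α := λ_min(Q) - σ λ_max(P) > 0`, if `x' = A_cl x + B K e` and the directional
triggering condition holds along the trajectory for all `t ≥ 0`, then
`V(t) = x(t)ᵀ P x(t)` satisfies `V(t) ≤ V(0) exp(-(α/λ_max(P)) t)`, hence
`‖x(t)‖² ≤ (λ_max(P)/λ_min(P)) exp(-(α/λ_max(P)) t) ‖x(0)‖²` and `x(t) → 0`. -/
theorem directional_trigger_asymptotic_stability {n m : ℕ}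
    (A : Matrix (Fin n) (Fin n) ℝ) (B : Matrix (Fin n) (Fin m) ℝ)
    (K : Matrix (Fin m) (Fin n) ℝ) (P Q : Matrix (Fin n) (Fin n) ℝ)
    (hP : P.PosDef) (hQ : Q.PosDef)
    (hLyap : (A - B * K)ᵀ * P + P * (A - B * K) = -Q)
    (σ : ℝ) (hσ : σ ∈ Set.Ioo (0 : ℝ) 1)
    (hα : 0 < (⨅ i, hQ.isHermitian.eigenvalues i)
            - σ * ⨆ i, hP.isHermitian.eigenvalues i)
    (x e : ℝ → EuclideanSpace ℝ (Fin n))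
    (hx : ∀ t ≥ (0 : ℝ), HasDerivAt x
      ((WithLp.toLp 2 ((A - B * K) *ᵥ x t + (B * K) *ᵥ e t) : EuclideanSpace ℝ (Fin n))) t)
    (htrig : ∀ t ≥ (0 : ℝ),
      2 * (x t ⬝ᵥ ((P * B * K) *ᵥ e t)) ≤ σ * (x t ⬝ᵥ (P *ᵥ x t))) :
    let lmaxP : ℝ := ⨆ i, hP.isHermitian.eigenvalues i
    let lminP : ℝ := ⨅ i, hP.isHermitian.eigenvalues i
    let α : ℝ := (⨅ i, hQ.isHermitian.eigenvalues i) - σ * lmaxP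
    (∀ t ≥ (0 : ℝ),
        x t ⬝ᵥ (P *ᵥ x t) ≤ (x 0 ⬝ᵥ (P *ᵥ x 0)) * Real.exp (-(α / lmaxP) * t)) ∧
    (∀ t ≥ (0 : ℝ),
        ‖x t‖ ^ 2 ≤ (lmaxP / lminP) * Real.exp (-(α / lmaxP) * t) * ‖x 0‖ ^ 2) ∧
    Filter.Tendsto x Filter.atTop (nhds 0) :=
  directional_trigger_asymptotic_stability_general A B K P Q hP hQ hLyap σ hα x e hx htrig
end

section
/- Assume P B K ≠ 0 and define Γ = σ λ_min(P) / (2 ‖P B K‖), where ‖P B K‖ is the operator norm of the matrix P B K on Euclidean space. If x, e ∈ ℝⁿ with x ≠ 0 satisfy ‖e‖ < Γ ‖x‖, then 2 xᵀ P B K e < σ xᵀ P x; that is, the directional triggering condition does not fire whenever the error-to-state norm ratio is below Γ. -/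
/-!
Cauchy–Schwarz and the operator norm bound the cross term `xᵀ (P B K) e` by
`‖P B K‖ ‖x‖ ‖e‖`, while the Rayleigh bound gives `xᵀ P x ≥ λ_min(P) ‖x‖²`; the ratio `Γ` is
exactly the threshold at which the first, doubled, drops below `σ` times the second.
-/

open Matrix

noncomputable def euclideanOpNorm {n : ℕ} (M : Matrix (Fin n) (Fin n) ℝ) : ℝ :=
  ‖LinearMap.toContinuousLinearMap (Matrix.toEuclideanLin M)‖

open scoped MatrixOrder RealInnerProductSpace

/-- `A - μ • 1` is positive semidefinite because the spectrum of `A` lies in `[μ, ∞)`. -/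
theorem Matrix.IsHermitian.mul_dotProduct_self_le {ι : Type*} [Fintype ι] [DecidableEq ι]
    {A : Matrix ι ι ℝ} (hA : A.IsHermitian) {μ : ℝ} (hμ : ∀ i, μ ≤ hA.eigenvalues i)
    (x : ι → ℝ) : μ * (x ⬝ᵥ x) ≤ x ⬝ᵥ (A *ᵥ x) := by
  have hle : algebraMap ℝ _ μ ≤ A := by
    rw [algebraMap_le_iff_le_spectrum (ha := hA.isSelfAdjoint),
      hA.spectrum_real_eq_range_eigenvalues]
    rintro _ ⟨i, rfl⟩
    exact hμ i
  have := hle.dotProduct_mulVec_nonneg x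
  simp only [star_trivial, sub_mulVec, Algebra.algebraMap_eq_smul_one, smul_mulVec, one_mulVec,
    dotProduct_sub, dotProduct_smul, smul_eq_mul] at this
  linarith

theorem two_inner_lt_of_norm_lt {E : Type*} [NormedAddCommGroup E] [InnerProductSpace ℝ E]
    (T : E →L[ℝ] E) {x e : E} {μ σ q : ℝ} (hμ : 0 ≤ μ) (hq : μ * ‖x‖ ^ 2 ≤ q)
    (he : ‖e‖ < σ * μ / (2 * ‖T‖) * ‖x‖) : 2 * ⟪x, T e⟫ < σ * q := by
  -- The bound on `‖e‖` forces the ratio to be positive; this excludes `‖T‖ = 0` (where the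
  -- division returns `0`), `x = 0` and `σ ≤ 0`.
  have hpos : 0 < σ * μ / (2 * ‖T‖) * ‖x‖ := (norm_nonneg e).trans_lt he
  have hΓ : 0 < σ * μ / (2 * ‖T‖) := pos_of_mul_pos_left hpos (norm_nonneg x)
  have hx : 0 < ‖x‖ := pos_of_mul_pos_right hpos hΓ.le
  have hT : 0 < ‖T‖ := by
    refine (norm_nonneg T).lt_of_ne fun hT => ?_
    simp [← hT] at hΓ
  have hσ : 0 < σ :=
    pos_of_mul_pos_left ((div_pos_iff_of_pos_right (by positivity)).1 hΓ) hμ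
  calc 2 * ⟪x, T e⟫ ≤ 2 * (‖x‖ * (‖T‖ * ‖e‖)) := by
        gcongr
        exact (real_inner_le_norm x (T e)).trans (by gcongr; exact T.le_opNorm e)
    _ < 2 * (‖x‖ * (‖T‖ * (σ * μ / (2 * ‖T‖) * ‖x‖))) := by gcongr
    _ = σ * (μ * ‖x‖ ^ 2) := by field_simp
    _ ≤ σ * q := by gcongr

theorem trigger_not_firing_below_ratio_general {n m : ℕ}
    (B : Matrix (Fin n) (Fin m) ℝ)
    (K : Matrix (Fin m) (Fin n) ℝ) (P : Matrix (Fin n) (Fin n) ℝ)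
    (hP : P.PosDef) (σ : ℝ)
    (x e : EuclideanSpace ℝ (Fin n))
    (he : ‖e‖ < (σ * (⨅ i, hP.isHermitian.eigenvalues i)
      / (2 * euclideanOpNorm (P * B * K))) * ‖x‖) :
    2 * (x ⬝ᵥ ((P * B * K) *ᵥ e)) < σ * (x ⬝ᵥ (P *ᵥ x)) := by
  have hμ : 0 ≤ ⨅ i, hP.isHermitian.eigenvalues i :=
    Real.iInf_nonneg fun i => hP.posSemidef.eigenvalues_nonneg i
  have hq : (⨅ i, hP.isHermitian.eigenvalues i) * ‖x‖ ^ 2 ≤ x ⬝ᵥ (P *ᵥ x) := by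
    rw [← real_inner_self_eq_norm_sq]
    exact hP.isHermitian.mul_dotProduct_self_le (fun i => ciInf_le (Finite.bddBelow_range _) i) x
  have hinner : x ⬝ᵥ ((P * B * K) *ᵥ e) =
      ⟪x, LinearMap.toContinuousLinearMap (toEuclideanLin (P * B * K)) e⟫ := by
    rw [dotProduct_comm]
    rfl
  rw [hinner]
  exact two_inner_lt_of_norm_lt _ hμ hq he

/-- **Sufficient condition for non-firing of the directional trigger.**
With `Γ = σ λ_min(P) / (2 ‖P B K‖)`, if `x ≠ 0` and `‖e‖ < Γ ‖x‖`, then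
`2 xᵀ P B K e < σ xᵀ P x`, i.e. the directional triggering condition does not fire. -/
theorem trigger_not_firing_below_ratio {n m : ℕ}
    (A : Matrix (Fin n) (Fin n) ℝ) (B : Matrix (Fin n) (Fin m) ℝ)
    (K : Matrix (Fin m) (Fin n) ℝ) (P : Matrix (Fin n) (Fin n) ℝ)
    (hP : P.PosDef) (σ : ℝ) (hσ : σ ∈ Set.Ioo (0 : ℝ) 1)
    (hPBK : P * B * K ≠ 0)
    (x e : EuclideanSpace ℝ (Fin n)) (hx : x ≠ 0)
    (he : ‖e‖ < (σ * (⨅ i, hP.isHermitian.eigenvalues i)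
      / (2 * euclideanOpNorm (P * B * K))) * ‖x‖) :
    2 * (x ⬝ᵥ ((P * B * K) *ᵥ e)) < σ * (x ⬝ᵥ (P *ᵥ x)) :=
  trigger_not_firing_below_ratio_general B K P hP σ x e he
end

section
/- Let L₁ = ‖B K‖, L₂ = ‖A_cl‖ + ‖B K‖, L₃ = ‖A_cl‖ (operator norms). Suppose x, e : ℝ → ℝⁿ are differentiable at t with x'(t) = A_cl x(t) + B K e(t) and e'(t) = A_cl x(t) + B K e(t), and x(t) ≠ 0, e(t) ≠ 0. Then the ratio ξ(s) = ‖e(s)‖/‖x(s)‖ is differentiable at t and satisfies ξ'(t) ≤ L₁ ξ(t)² + L₂ ξ(t) + L₃. -/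
/-!
Write `v = A_cl x + B K e` for the common derivative of `x` and `e`. The derivative of a norm
`‖f‖` away from zero is `⟪f, f'⟫ / ‖f‖`, which Cauchy–Schwarz bounds by `‖f'‖` in absolute
value; the quotient rule then gives `ξ' ≤ ‖v‖ (‖x‖ + ‖e‖) / ‖x‖²`. Finally
`‖v‖ ≤ ‖A_cl‖ ‖x‖ + ‖B K‖ ‖e‖`, and expanding `(L₃ + L₁ ξ)(1 + ξ)` gives the claim.
-/

open Matrix

section NormDeriv

open scoped RealInnerProductSpace

variable {F : Type*} [NormedAddCommGroup F] [InnerProductSpace ℝ F]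

theorem HasDerivAt.norm_of_ne_zero {f : ℝ → F} {f' : F} {t : ℝ}
    (hf : HasDerivAt f f' t) (h0 : f t ≠ 0) :
    HasDerivAt (fun s => ‖f s‖) (⟪f t, f'⟫ / ‖f t‖) t := by
  have h := hf.norm_sq.sqrt (by simpa using h0)
  simp only [Real.sqrt_sq (norm_nonneg _)] at h
  convert h using 1
  ring

theorem real_inner_div_norm_le_norm (a b : F) : ⟪a, b⟫ / ‖a‖ ≤ ‖b‖ :=
  div_le_of_le_mul₀ (norm_nonneg _) (norm_nonneg _)
    ((real_inner_le_norm a b).trans_eq (mul_comm _ _))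

theorem neg_norm_le_real_inner_div_norm (a b : F) : -‖b‖ ≤ ⟪a, b⟫ / ‖a‖ := by
  have h := real_inner_div_norm_le_norm a (-b)
  rw [inner_neg_right, neg_div, norm_neg] at h
  linarith

theorem exists_hasDerivAt_norm_div_norm_le {u w : ℝ → F} {u' w' : F} {t : ℝ}
    (hu : HasDerivAt u u' t) (hw : HasDerivAt w w' t) (hu0 : u t ≠ 0) (hw0 : w t ≠ 0) :
    ∃ d, HasDerivAt (fun s => ‖w s‖ / ‖u s‖) d t ∧
      d ≤ (‖w'‖ * ‖u t‖ + ‖w t‖ * ‖u'‖) / ‖u t‖ ^ 2 := by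
  refine ⟨_, (hw.norm_of_ne_zero hw0).div (hu.norm_of_ne_zero hu0) (norm_ne_zero_iff.2 hu0), ?_⟩
  gcongr
  have hw' := mul_le_mul_of_nonneg_right (real_inner_div_norm_le_norm (w t) w')
    (norm_nonneg (u t))
  have hu' := mul_le_mul_of_nonneg_left (neg_norm_le_real_inner_div_norm (u t) u')
    (norm_nonneg (w t))
  linarith

end NormDeriv

theorem norm_toLp_mulVec_add_mulVec_le {n : ℕ} (M N : Matrix (Fin n) (Fin n) ℝ)
    (x e : EuclideanSpace ℝ (Fin n)) :
    ‖(WithLp.toLp 2 (M *ᵥ x + N *ᵥ e) : EuclideanSpace ℝ (Fin n))‖ ≤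
      euclideanOpNorm M * ‖x‖ + euclideanOpNorm N * ‖e‖ :=
  calc ‖Matrix.toEuclideanLin M x + Matrix.toEuclideanLin N e‖
      ≤ ‖Matrix.toEuclideanLin M x‖ + ‖Matrix.toEuclideanLin N e‖ := norm_add_le _ _
    _ ≤ euclideanOpNorm M * ‖x‖ + euclideanOpNorm N * ‖e‖ :=
      add_le_add ((LinearMap.toContinuousLinearMap _).le_opNorm x)
        ((LinearMap.toContinuousLinearMap _).le_opNorm e)

/-- **Differential inequality for the error-to-state ratio.**
With `L₁ = ‖B K‖`, `L₂ = ‖A_cl‖ + ‖B K‖`, `L₃ = ‖A_cl‖`, if both `x` and `e`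
satisfy the closed-loop dynamics `x' = e' = A_cl x + B K e` at `t` and
`x(t) ≠ 0`, `e(t) ≠ 0`, then `ξ(s) = ‖e(s)‖/‖x(s)‖` is differentiable at `t` and
its derivative satisfies `ξ'(t) ≤ L₁ ξ(t)² + L₂ ξ(t) + L₃`. -/
theorem ratio_differential_inequality {n m : ℕ}
    (A : Matrix (Fin n) (Fin n) ℝ) (B : Matrix (Fin n) (Fin m) ℝ)
    (K : Matrix (Fin m) (Fin n) ℝ)
    (x e : ℝ → EuclideanSpace ℝ (Fin n)) (t : ℝ)
    (hx : HasDerivAt x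
      ((WithLp.toLp 2 ((A - B * K) *ᵥ x t + (B * K) *ᵥ e t) : EuclideanSpace ℝ (Fin n))) t)
    (he : HasDerivAt e
      ((WithLp.toLp 2 ((A - B * K) *ᵥ x t + (B * K) *ᵥ e t) : EuclideanSpace ℝ (Fin n))) t)
    (hxne : x t ≠ 0) (hene : e t ≠ 0) :
    let L₁ : ℝ := euclideanOpNorm (B * K)
    let L₂ : ℝ := euclideanOpNorm (A - B * K) + euclideanOpNorm (B * K)
    let L₃ : ℝ := euclideanOpNorm (A - B * K)
    let ξ : ℝ → ℝ := fun s => ‖e s‖ / ‖x s‖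
    ∃ d : ℝ, HasDerivAt ξ d t ∧ d ≤ L₁ * ξ t ^ 2 + L₂ * ξ t + L₃ := by
  intro L₁ L₂ L₃ ξ
  obtain ⟨d, hd, hd_le⟩ := exists_hasDerivAt_norm_div_norm_le hx he hxne hene
  have hv := norm_toLp_mulVec_add_mulVec_le (A - B * K) (B * K) (x t) (e t)
  have hx_pos : 0 < ‖x t‖ := norm_pos_iff.2 hxne
  refine ⟨d, hd, ?_⟩
  calc d ≤ _ := hd_le
    _ ≤ ((L₃ * ‖x t‖ + L₁ * ‖e t‖) * ‖x t‖ + ‖e t‖ * (L₃ * ‖x t‖ + L₁ * ‖e t‖)) / ‖x t‖ ^ 2 := by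
      gcongr
    _ = L₁ * ξ t ^ 2 + L₂ * ξ t + L₃ := by
      simp only [ξ, L₂]
      field_simp
      ring
end

section
/- Assume P B K ≠ 0 and let Γ = σ λ_min(P) / (2 ‖P B K‖), L₁ = ‖B K‖, L₂ = ‖A_cl‖ + ‖B K‖, L₃ = ‖A_cl‖, and τ* = ∫₀^Γ ds / (L₁ s² + L₂ s + L₃). Suppose x : ℝ → ℝⁿ is differentiable, t_k < t_{k+1}, e(t) := x(t) - x(t_k) satisfies x'(t) = A_cl x(t) + B K e(t) for t ∈ [t_k, t_{k+1}], x(t) ≠ 0 on [t_k, t_{k+1}], e(t) ≠ 0 on (t_k, t_{k+1}], and the triggering condition fires at t_{k+1}, i.e., 2 x(t_{k+1})ᵀ P B K e(t_{k+1}) ≥ σ x(t_{k+1})ᵀ P x(t_{k+1}). Then t_{k+1} - t_k ≥ τ* > 0; in particular, Zeno behavior is excluded. -/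
/-!
The error ratio `r = ‖e‖ / ‖x‖` vanishes at `t_k`. Since `ė = ẋ = A_cl x + B K e`, the norms
satisfy `d‖e‖/dt ≤ ‖ẋ‖` and `d‖x‖/dt ≥ -‖ẋ‖`, whence `ṙ ≤ (L₃ + L₁ r)(1 + r) = L₁ r² + L₂ r + L₃`.
By comparison with the solution of `ṙ = L₁ r² + L₂ r + L₃`, `r` cannot reach a level `u` before
time `∫₀^u ds / (L₁ s² + L₂ s + L₃)`. When the trigger fires,
`σ λ_min ‖x‖² ≤ σ xᵀ P x ≤ 2 xᵀ P B K e ≤ 2 ‖P B K‖ ‖x‖ ‖e‖`, i.e. `r ≥ Γ`.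
The integrand is integrable at `0` because `L₃ > 0`: if `A_cl = 0` then `ė = B K e` with
`e(t_k) = 0`, so Grönwall forces `e ≡ 0`.
-/

open Matrix

open Set

section EuclideanOpNorm

open scoped Matrix.Norms.L2Operator

variable {n : ℕ}

lemma euclideanOpNorm_nonneg (M : Matrix (Fin n) (Fin n) ℝ) : 0 ≤ euclideanOpNorm M :=
  norm_nonneg M

lemma euclideanOpNorm_pos {M : Matrix (Fin n) (Fin n) ℝ} (hM : M ≠ 0) : 0 < euclideanOpNorm M :=
  (norm_pos_iff (a := M)).mpr hM

lemma norm_toLp_mulVec_le (M : Matrix (Fin n) (Fin n) ℝ) (v : EuclideanSpace ℝ (Fin n)) :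
    ‖WithLp.toLp 2 (M *ᵥ v)‖ ≤ euclideanOpNorm M * ‖v‖ :=
  M.l2_opNorm_mulVec v

lemma norm_toLp_mulVec_add_mulVec_sub_le (M N : Matrix (Fin n) (Fin n) ℝ)
    (v w : EuclideanSpace ℝ (Fin n)) :
    ‖WithLp.toLp 2 (M *ᵥ v + N *ᵥ (v - w))‖
      ≤ euclideanOpNorm M * ‖v‖ + euclideanOpNorm N * ‖v - w‖ := by
  rw [WithLp.toLp_add]
  exact (norm_add_le _ _).trans
    (add_le_add (norm_toLp_mulVec_le M v) (norm_toLp_mulVec_le N (v - w)))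

lemma dotProduct_mulVec_eq_inner {ι : Type*} [Fintype ι] (M : Matrix ι ι ℝ)
    (v w : EuclideanSpace ℝ ι) : v ⬝ᵥ (M *ᵥ w) = inner ℝ v (WithLp.toLp 2 (M *ᵥ w)) := by
  rw [EuclideanSpace.inner_eq_star_dotProduct, star_trivial, dotProduct_comm]

lemma dotProduct_mulVec_le (M : Matrix (Fin n) (Fin n) ℝ) (v w : EuclideanSpace ℝ (Fin n)) :
    v ⬝ᵥ (M *ᵥ w) ≤ euclideanOpNorm M * (‖v‖ * ‖w‖) :=
  calc v ⬝ᵥ (M *ᵥ w) = inner ℝ v (WithLp.toLp 2 (M *ᵥ w)) := dotProduct_mulVec_eq_inner M v w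
    _ ≤ ‖v‖ * ‖WithLp.toLp 2 (M *ᵥ w)‖ := real_inner_le_norm _ _
    _ ≤ ‖v‖ * (euclideanOpNorm M * ‖w‖) := by gcongr; exact norm_toLp_mulVec_le M w
    _ = euclideanOpNorm M * (‖v‖ * ‖w‖) := by ring

end EuclideanOpNorm

namespace Matrix.IsHermitian

variable {ι : Type*} [Fintype ι] [DecidableEq ι] {P : Matrix ι ι ℝ}

lemma iInf_eigenvalues_mul_norm_sq_le_s8 (hP : P.IsHermitian) (v : EuclideanSpace ℝ ι) :
    (⨅ i, hP.eigenvalues i) * ‖v‖ ^ 2 ≤ v ⬝ᵥ (P *ᵥ v) := by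
  set b := hP.eigenvectorBasis
  have hsymm := isSymmetric_toEuclideanLin_iff.mpr hP
  have hTb (i : ι) : toEuclideanLin P (b i) = hP.eigenvalues i • b i :=
    WithLp.ofLp_injective 2 (hP.mulVec_eigenvectorBasis i)
  have hexpand : v ⬝ᵥ (P *ᵥ v) = ∑ i, hP.eigenvalues i * inner ℝ (b i) v ^ 2 := by
    calc v ⬝ᵥ (P *ᵥ v) = inner ℝ v (toEuclideanLin P v) := dotProduct_mulVec_eq_inner P v v
      _ = ∑ i, inner ℝ v (b i) * inner ℝ (b i) (toEuclideanLin P v) :=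
          (b.sum_inner_mul_inner _ _).symm
      _ = ∑ i, hP.eigenvalues i * inner ℝ (b i) v ^ 2 := by
          congr! 1 with i
          rw [← hsymm, hTb, real_inner_smul_left, real_inner_comm]
          ring
  rw [hexpand, ← b.sum_sq_inner_right, Finset.mul_sum]
  gcongr with i
  exact ciInf_le (Finite.bddBelow_range _) i

end Matrix.IsHermitian

lemma Matrix.PosDef.iInf_eigenvalues_pos_s8 {ι : Type*} [Fintype ι] [DecidableEq ι] [Nonempty ι]
    {P : Matrix ι ι ℝ} (hP : P.PosDef) : 0 < ⨅ i, hP.isHermitian.eigenvalues i := by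
  obtain ⟨i, hi⟩ := exists_eq_ciInf_of_finite (f := hP.isHermitian.eigenvalues)
  exact hi ▸ hP.eigenvalues_pos i

section NormDeriv

open scoped RealInnerProductSpace

variable {E : Type*} [NormedAddCommGroup E] [InnerProductSpace ℝ E]

lemma HasDerivAt.norm {f : ℝ → E} {f' : E} {t : ℝ} (hf : HasDerivAt f f' t) (h0 : f t ≠ 0) :
    HasDerivAt (fun s => ‖f s‖) (⟪f t, f'⟫ / ‖f t‖) t := by
  have hsq : ‖f t‖ ^ 2 ≠ 0 := by positivity
  have := (Real.hasDerivAt_sqrt hsq).comp t hf.norm_sq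
  simp only [Function.comp_def, Real.sqrt_sq (norm_nonneg _)] at this
  refine this.congr_deriv ?_
  field_simp

lemma abs_real_inner_div_norm_le (u w : E) : |⟪u, w⟫ / ‖u‖| ≤ ‖w‖ := by
  rw [abs_div, abs_norm]
  exact div_le_of_le_mul₀ (norm_nonneg _) (norm_nonneg _)
    (by rw [mul_comm]; exact abs_real_inner_le_norm u w)

lemma exists_hasDerivAt_norm_div_norm_le_s8 {f g : ℝ → E} {f' g' : E} {t : ℝ}
    (hf : HasDerivAt f f' t) (hg : HasDerivAt g g' t) (hf0 : f t ≠ 0) (hg0 : g t ≠ 0) :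
    ∃ D, HasDerivAt (fun s => ‖f s‖ / ‖g s‖) D t ∧
      D ≤ (‖f'‖ * ‖g t‖ + ‖f t‖ * ‖g'‖) / ‖g t‖ ^ 2 := by
  refine ⟨_, (hf.norm hf0).div (hg.norm hg0) (norm_ne_zero_iff.mpr hg0), ?_⟩
  have hf'_le := (abs_le.mp (abs_real_inner_div_norm_le (f t) f')).2
  have hg'_ge := (abs_le.mp (abs_real_inner_div_norm_le (g t) g')).1
  gcongr
  nlinarith [norm_nonneg (f t), norm_nonneg (g t)]

end NormDeriv

/-- The time the solution of `ṙ = q r`, `r 0 = 0`, needs to reach the level `u`. -/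
noncomputable def reachTime (q : ℝ → ℝ) (u : ℝ) : ℝ := ∫ s in (0 : ℝ)..u, 1 / q s

namespace reachTime

variable {q : ℝ → ℝ}

lemma continuousOn_one_div (hq : ContinuousOn q (Ici 0)) (hq_pos : ∀ s ∈ Ici 0, 0 < q s) :
    ContinuousOn (fun s => 1 / q s) (Ici 0) :=
  continuousOn_const.div hq fun s hs => (hq_pos s hs).ne'

lemma intervalIntegrable (hq : ContinuousOn q (Ici 0)) (hq_pos : ∀ s ∈ Ici 0, 0 < q s)
    {a b : ℝ} (ha : 0 ≤ a) (hb : 0 ≤ b) :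
    IntervalIntegrable (fun s => 1 / q s) MeasureTheory.volume a b :=
  ((continuousOn_one_div hq hq_pos).mono fun _ hs =>
    le_trans (le_min ha hb) hs.1).intervalIntegrable

lemma continuousOn (hq : ContinuousOn q (Ici 0)) (hq_pos : ∀ s ∈ Ici 0, 0 < q s) :
    ContinuousOn (reachTime q) (Ici 0) := by
  intro u hu
  have hu1 : (0 : ℝ) ≤ u + 1 := by linarith [mem_Ici.mp hu]
  have hint : MeasureTheory.IntegrableOn (fun s => 1 / q s) (uIcc 0 (u + 1)) := by
    rw [uIcc_of_le hu1]
    exact ((continuousOn_one_div hq hq_pos).mono Icc_subset_Ici_self).integrableOn_Icc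
  have hIcc := intervalIntegral.continuousOn_primitive_interval hint
  rw [uIcc_of_le hu1] at hIcc
  refine (hIcc u ⟨hu, by linarith⟩).mono_of_mem_nhdsWithin ?_
  rw [← Ici_inter_Iic]
  exact inter_mem_nhdsWithin _ (Iic_mem_nhds (by linarith))

lemma hasDerivAt (hq : ContinuousOn q (Ici 0)) (hq_pos : ∀ s ∈ Ici 0, 0 < q s) {u : ℝ}
    (hu : 0 < u) : HasDerivAt (reachTime q) (1 / q u) u :=
  intervalIntegral.integral_hasDerivAt_right (intervalIntegrable hq hq_pos le_rfl hu.le)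
    (((continuousOn_one_div hq hq_pos).mono Ioi_subset_Ici_self).stronglyMeasurableAtFilter
      isOpen_Ioi _ hu)
    ((continuousOn_one_div hq hq_pos).continuousAt (Ici_mem_nhds hu))

lemma monotoneOn (hq : ContinuousOn q (Ici 0)) (hq_pos : ∀ s ∈ Ici 0, 0 < q s) :
    MonotoneOn (reachTime q) (Ici 0) := by
  refine monotoneOn_of_deriv_nonneg (convex_Ici 0) (continuousOn hq hq_pos) ?_ ?_ <;>
    rw [interior_Ici]
  · exact fun u hu => (hasDerivAt hq hq_pos hu).differentiableAt.differentiableWithinAt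
  · intro u hu
    rw [(hasDerivAt hq hq_pos hu).deriv]
    exact (one_div_pos.mpr (hq_pos u (Ioi_subset_Ici_self hu))).le

lemma pos (hq : ContinuousOn q (Ici 0)) (hq_pos : ∀ s ∈ Ici 0, 0 < q s) {u : ℝ} (hu : 0 < u) :
    0 < reachTime q u :=
  intervalIntegral.intervalIntegral_pos_of_pos_on (intervalIntegrable hq hq_pos le_rfl hu.le)
    (fun s hs => one_div_pos.mpr (hq_pos s hs.1.le)) hu

lemma le_of_hasDerivAt_le (hq : ContinuousOn q (Ici 0)) (hq_pos : ∀ s ∈ Ici 0, 0 < q s)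
    {r : ℝ → ℝ} {a b : ℝ} (hab : a ≤ b) (hr : ContinuousOn r (Icc a b)) (hra : r a = 0)
    (hr_nonneg : ∀ t ∈ Icc a b, 0 ≤ r t) (hr_pos : ∀ t ∈ Ioo a b, 0 < r t)
    (hr' : ∀ t ∈ Ioo a b, ∃ D, HasDerivAt r D t ∧ D ≤ q (r t)) :
    reachTime q (r b) ≤ b - a := by
  have hφ' (t : ℝ) (ht : t ∈ Ioo a b) :
      ∃ D, HasDerivAt (reachTime q ∘ r) D t ∧ D ≤ 1 := by
    obtain ⟨D, hD, hDle⟩ := hr' t ht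
    have hqr := hq_pos (r t) (hr_pos t ht).le
    refine ⟨_, (hasDerivAt hq hq_pos (hr_pos t ht)).comp t hD, ?_⟩
    rw [one_div_mul_eq_div, div_le_one hqr]
    exact hDle
  have hφ := (convex_Icc a b).image_sub_le_mul_sub_of_deriv_le (C := 1)
    ((continuousOn hq hq_pos).comp hr hr_nonneg) ?_ ?_ a (left_mem_Icc.mpr hab) b
    (right_mem_Icc.mpr hab) hab
  · have h0 : reachTime q 0 = 0 := intervalIntegral.integral_same
    simpa [hra, h0] using hφ
  all_goals rw [interior_Icc]
  · intro t ht
    obtain ⟨D, hD, -⟩ := hφ' t ht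
    exact hD.differentiableAt.differentiableWithinAt
  · intro t ht
    obtain ⟨D, hD, hDle⟩ := hφ' t ht
    rwa [hD.deriv]

end reachTime

section SampledData

variable {n : ℕ} {M N : Matrix (Fin n) (Fin n) ℝ} {x : ℝ → EuclideanSpace ℝ (Fin n)} {a b : ℝ}

lemma euclideanOpNorm_pos_of_error_ne_zero (hab : a ≤ b)
    (hdyn : ∀ t ∈ Icc a b, HasDerivAt x (WithLp.toLp 2 (M *ᵥ x t + N *ᵥ (x t - x a))) t)
    (he : x b - x a ≠ 0) : 0 < euclideanOpNorm M := by
  refine (euclideanOpNorm_nonneg M).lt_of_ne fun hM => he ?_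
  refine eq_zero_of_abs_deriv_le_mul_abs_self_of_eq_zero_right (f := fun t => x t - x a)
    (f' := fun t => WithLp.toLp 2 (M *ᵥ x t + N *ᵥ (x t - x a))) (K := euclideanOpNorm N)
    (fun t ht => ?_) (fun t ht => ?_) (sub_self _) (fun t ht => ?_) b ⟨hab, le_rfl⟩
  · exact ((hdyn t ht).continuousAt.sub continuousAt_const).continuousWithinAt
  · exact ((hdyn t (Ico_subset_Icc_self ht)).sub_const (x a)).hasDerivWithinAt
  · simpa [← hM] using norm_toLp_mulVec_add_mulVec_sub_le M N (x t) (x a)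

lemma reachTime_norm_sub_div_norm_le (hab : a < b)
    (hdyn : ∀ t ∈ Icc a b, HasDerivAt x (WithLp.toLp 2 (M *ᵥ x t + N *ᵥ (x t - x a))) t)
    (hx : ∀ t ∈ Icc a b, x t ≠ 0) (he : ∀ t ∈ Ioc a b, x t - x a ≠ 0)
    (hM : 0 < euclideanOpNorm M) :
    reachTime (fun s => euclideanOpNorm N * s ^ 2 + (euclideanOpNorm M + euclideanOpNorm N) * s
      + euclideanOpNorm M) (‖x b - x a‖ / ‖x b‖) ≤ b - a := by
  have hN := euclideanOpNorm_nonneg N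
  have hcont : ContinuousOn x (Icc a b) := fun t ht => (hdyn t ht).continuousAt.continuousWithinAt
  refine reachTime.le_of_hasDerivAt_le (r := fun t => ‖x t - x a‖ / ‖x t‖)
    (by fun_prop) (fun s hs => by have := mem_Ici.mp hs; positivity) hab.le ?_ (by simp)
    (fun t _ => by positivity) (fun t ht => ?_) (fun t ht => ?_)
  · exact (hcont.sub continuousOn_const).norm.div hcont.norm
      fun t ht => norm_ne_zero_iff.mpr (hx t ht)
  · exact div_pos (norm_pos_iff.mpr (he t (Ioo_subset_Ioc_self ht)))
      (norm_pos_iff.mpr (hx t (Ioo_subset_Icc_self ht)))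
  · have hxt := hx t (Ioo_subset_Icc_self ht)
    have hdx := hdyn t (Ioo_subset_Icc_self ht)
    obtain ⟨D, hD, hDle⟩ := exists_hasDerivAt_norm_div_norm_le_s8 (hdx.sub_const (x a)) hdx
      (he t (Ioo_subset_Ioc_self ht)) hxt
    refine ⟨D, hD, hDle.trans ?_⟩
    set v := WithLp.toLp 2 (M *ᵥ x t + N *ᵥ (x t - x a))
    have hv := norm_toLp_mulVec_add_mulVec_sub_le M N (x t) (x a)
    have hX : 0 < ‖x t‖ := norm_pos_iff.mpr hxt
    calc (‖v‖ * ‖x t‖ + ‖x t - x a‖ * ‖v‖) / ‖x t‖ ^ 2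
        = ‖v‖ * (‖x t‖ + ‖x t - x a‖) / ‖x t‖ ^ 2 := by ring
      _ ≤ (euclideanOpNorm M * ‖x t‖ + euclideanOpNorm N * ‖x t - x a‖)
            * (‖x t‖ + ‖x t - x a‖) / ‖x t‖ ^ 2 := by gcongr
      _ = _ := by field_simp; ring

end SampledData

lemma Matrix.IsHermitian.mul_iInf_eigenvalues_div_le_norm_div_norm {n : ℕ}
    {P G : Matrix (Fin n) (Fin n) ℝ} (hP : P.IsHermitian) {σ : ℝ} (hσ : 0 ≤ σ)
    {v w : EuclideanSpace ℝ (Fin n)} (hv : v ≠ 0)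
    (hfire : 2 * (v ⬝ᵥ (G *ᵥ w)) ≥ σ * (v ⬝ᵥ (P *ᵥ v))) :
    σ * (⨅ i, hP.eigenvalues i) / (2 * euclideanOpNorm G) ≤ ‖w‖ / ‖v‖ := by
  have hv' : 0 < ‖v‖ := norm_pos_iff.mpr hv
  have hG := euclideanOpNorm_nonneg G
  have hbound : σ * (⨅ i, hP.eigenvalues i) * ‖v‖ * ‖v‖ ≤ 2 * euclideanOpNorm G * ‖w‖ * ‖v‖ :=
    calc σ * (⨅ i, hP.eigenvalues i) * ‖v‖ * ‖v‖ = σ * ((⨅ i, hP.eigenvalues i) * ‖v‖ ^ 2) := by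
          ring
      _ ≤ σ * (v ⬝ᵥ (P *ᵥ v)) := by gcongr; exact hP.iInf_eigenvalues_mul_norm_sq_le_s8 v
      _ ≤ 2 * (v ⬝ᵥ (G *ᵥ w)) := hfire
      _ ≤ 2 * (euclideanOpNorm G * (‖v‖ * ‖w‖)) := by gcongr; exact dotProduct_mulVec_le G v w
      _ = 2 * euclideanOpNorm G * ‖w‖ * ‖v‖ := by ring
  refine div_le_of_le_mul₀ (by positivity) (by positivity) ?_
  rw [div_mul_eq_mul_div, le_div_iff₀ hv', mul_comm ‖w‖]
  exact le_of_mul_le_mul_right hbound hv'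

theorem minimum_interevent_time_general {n m : ℕ}
    (A : Matrix (Fin n) (Fin n) ℝ) (B : Matrix (Fin n) (Fin m) ℝ)
    (K : Matrix (Fin m) (Fin n) ℝ) (P : Matrix (Fin n) (Fin n) ℝ)
    (hP : P.PosDef) (σ : ℝ) (hσ : σ ∈ Set.Ioo (0 : ℝ) 1)
    (hPBK : P * B * K ≠ 0)
    (x : ℝ → EuclideanSpace ℝ (Fin n))
    (tk tk1 : ℝ) (hlt : tk < tk1)
    (hdyn : ∀ t ∈ Set.Icc tk tk1, HasDerivAt x
      ((WithLp.toLp 2 ((A - B * K) *ᵥ x t + (B * K) *ᵥ (x t - x tk)) : EuclideanSpace ℝ (Fin n))) t)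
    (hxne : ∀ t ∈ Set.Icc tk tk1, x t ≠ 0)
    (hene : ∀ t ∈ Set.Ioc tk tk1, x t - x tk ≠ 0)
    (hfire : 2 * (x tk1 ⬝ᵥ ((P * B * K) *ᵥ (x tk1 - x tk)))
      ≥ σ * (x tk1 ⬝ᵥ (P *ᵥ x tk1))) :
    let Γ : ℝ := σ * (⨅ i, hP.isHermitian.eigenvalues i)
      / (2 * euclideanOpNorm (P * B * K))
    let L₁ : ℝ := euclideanOpNorm (B * K)
    let L₂ : ℝ := euclideanOpNorm (A - B * K) + euclideanOpNorm (B * K)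
    let L₃ : ℝ := euclideanOpNorm (A - B * K)
    let τstar : ℝ := ∫ s in (0 : ℝ)..Γ, 1 / (L₁ * s ^ 2 + L₂ * s + L₃)
    tk1 - tk ≥ τstar ∧ 0 < τstar := by
  intro Γ L₁ L₂ L₃ τstar
  have hL₁ : 0 ≤ L₁ := euclideanOpNorm_nonneg _
  have hL₂ : 0 ≤ L₂ := add_nonneg (euclideanOpNorm_nonneg _) hL₁
  have hL₃ : 0 < L₃ := euclideanOpNorm_pos_of_error_ne_zero hlt.le hdyn (hene tk1 ⟨hlt, le_rfl⟩)
  have hq : ContinuousOn (fun s => L₁ * s ^ 2 + L₂ * s + L₃) (Ici 0) := by fun_prop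
  have hq_pos (s : ℝ) (hs : s ∈ Ici 0) : 0 < L₁ * s ^ 2 + L₂ * s + L₃ :=
    add_pos_of_nonneg_of_pos (add_nonneg (mul_nonneg hL₁ (sq_nonneg s)) (mul_nonneg hL₂ hs)) hL₃
  have hx₁ : x tk1 ≠ 0 := hxne tk1 ⟨hlt.le, le_rfl⟩
  have : Nonempty (Fin n) := not_isEmpty_iff.mp fun _ => hx₁ (Subsingleton.elim _ _)
  have hΓ : 0 < Γ := div_pos (mul_pos hσ.1 hP.iInf_eigenvalues_pos_s8)
    (mul_pos two_pos (euclideanOpNorm_pos hPBK))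
  have hΓ_le : Γ ≤ ‖x tk1 - x tk‖ / ‖x tk1‖ :=
    hP.isHermitian.mul_iInf_eigenvalues_div_le_norm_div_norm hσ.1.le hx₁ hfire
  refine ⟨?_, reachTime.pos hq hq_pos hΓ⟩
  calc τstar ≤ reachTime _ (‖x tk1 - x tk‖ / ‖x tk1‖) :=
        reachTime.monotoneOn hq hq_pos hΓ.le
          (div_nonneg (norm_nonneg _) (norm_nonneg _)) hΓ_le
    _ ≤ tk1 - tk := reachTime_norm_sub_div_norm_le hlt hdyn hxne hene hL₃

/-- **Positive minimum inter-event time (exclusion of Zeno behavior).**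
With `Γ = σ λ_min(P) / (2 ‖P B K‖)`, `L₁ = ‖B K‖`, `L₂ = ‖A_cl‖ + ‖B K‖`,
`L₃ = ‖A_cl‖` and `τ* = ∫₀^Γ ds / (L₁ s² + L₂ s + L₃)`, if the closed-loop
dynamics hold on `[t_k, t_{k+1}]` with error `e(t) = x(t) - x(t_k)` and the
directional trigger fires at `t_{k+1}`, then `t_{k+1} - t_k ≥ τ* > 0`. -/
theorem minimum_interevent_time {n m : ℕ}
    (A : Matrix (Fin n) (Fin n) ℝ) (B : Matrix (Fin n) (Fin m) ℝ)
    (K : Matrix (Fin m) (Fin n) ℝ) (P : Matrix (Fin n) (Fin n) ℝ)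
    (hP : P.PosDef) (σ : ℝ) (hσ : σ ∈ Set.Ioo (0 : ℝ) 1)
    (hPBK : P * B * K ≠ 0)
    (x : ℝ → EuclideanSpace ℝ (Fin n)) (hxdiff : Differentiable ℝ x)
    (tk tk1 : ℝ) (hlt : tk < tk1)
    (hdyn : ∀ t ∈ Set.Icc tk tk1, HasDerivAt x
      ((WithLp.toLp 2 ((A - B * K) *ᵥ x t + (B * K) *ᵥ (x t - x tk)) : EuclideanSpace ℝ (Fin n))) t)
    (hxne : ∀ t ∈ Set.Icc tk tk1, x t ≠ 0)
    (hene : ∀ t ∈ Set.Ioc tk tk1, x t - x tk ≠ 0)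
    (hfire : 2 * (x tk1 ⬝ᵥ ((P * B * K) *ᵥ (x tk1 - x tk)))
      ≥ σ * (x tk1 ⬝ᵥ (P *ᵥ x tk1))) :
    let Γ : ℝ := σ * (⨅ i, hP.isHermitian.eigenvalues i)
      / (2 * euclideanOpNorm (P * B * K))
    let L₁ : ℝ := euclideanOpNorm (B * K)
    let L₂ : ℝ := euclideanOpNorm (A - B * K) + euclideanOpNorm (B * K)
    let L₃ : ℝ := euclideanOpNorm (A - B * K)
    let τstar : ℝ := ∫ s in (0 : ℝ)..Γ, 1 / (L₁ * s ^ 2 + L₂ * s + L₃)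
    tk1 - tk ≥ τstar ∧ 0 < τstar :=
  minimum_interevent_time_general A B K P hP σ hσ hPBK x tk tk1 hlt hdyn hxne hene hfire
end
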